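/- arXiv:2212.00303 — 2 statements merged into one kernel-verified Lean document; each statement's English description precedes it below -/
import Mathlib

section
/- Let φ : ℝ^m → ℝ∪{+∞} be proper and lower semicontinuous, and let g : X → ℝ^m be parabolically semidifferentiable at x̄ ∈ g^{-1}(dom φ). For any w with dg(x̄)(w) ∈ T_{dom φ}(g(x̄)) define, for p ∈ ℝ^m, S_w(p) := {u ∈ X : g''(x̄;w,u) + p ∈ T²_{dom φ}(g(x̄), dg(x̄)(w))}. If there exist κ > 0 and ε > 0 with dist(x, g^{-1}(dom φ)) ≤ κ·dist(g(x), dom φ) for all x with ‖x−x̄‖ ≤ ε (metric subregularity of x ↦ g(x) − dom φ at (x̄,0) with modulus κ), then S_w(p) ⊆ S_w(0) + κ‖p‖·B_X for all p ∈ ℝ^m, where B_X is the closed unit ball of X. -/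
/-!
Take `u` with `g''(x̄;w,u) + p ∈ T²_D(g x̄, dg w)`, `D = dom φ`: there are `τ_k ↓ 0` and
`v_k → g''(x̄;w,u) + p` with `g x̄ + τ_k dg w + (τ_k²/2) v_k ∈ D`. On the parabola
`x_k = x̄ + τ_k w + (τ_k²/2) u` we have `g x_k = g x̄ + τ_k dg w + (τ_k²/2) r_k` with
`r_k → g''(x̄;w,u)`, so `g x_k` is within `(τ_k²/2)‖r_k - v_k‖` of `D`. Metric subregularity
moves `x_k` into `g⁻¹ D` at cost `κ (τ_k²/2)‖r_k - v_k‖ + o(τ_k²)`, i.e. replaces `u` by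
directions `u_k` with `limsup ‖u_k - u‖ ≤ κ‖p‖`. A cluster point `u₀` lies in
`T²_{g⁻¹ D}(x̄, w)`, and the parabolic semiderivative maps that set into
`{u₀ | g''(x̄;w,u₀) ∈ T²_D(g x̄, dg w)}`.
-/

open Filter Topology Metric Set Pointwise
open scoped RealInnerProductSpace Classical

noncomputable section

namespace Paper

variable {X : Type*} [NormedAddCommGroup X] [NormedSpace ℝ X]
variable {Y : Type*} [NormedAddCommGroup Y] [NormedSpace ℝ Y]

/-- The effective domain of an extended-real-valued function. -/
def edom (h : X → EReal) : Set X := {x | h x ≠ ⊤}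

/-- A function with values in `ℝ ∪ {+∞}` is proper if it is nowhere `⊥` and
finite somewhere. -/
def Proper (h : X → EReal) : Prop := (∀ x, h x ≠ ⊥) ∧ ∃ x, h x ≠ ⊤

/-- The indicator function `δ_C` of a set `C`. -/
def ind (C : Set X) : X → EReal := fun x => if x ∈ C then (0 : EReal) else ⊤

/-- The tangent cone `T_S(x)`. -/
def tcone (S : Set X) (x : X) : Set X :=
  {w | ∃ τ : ℕ → ℝ, (∀ k, 0 < τ k) ∧ Tendsto τ atTop (𝓝 0) ∧
    Tendsto (fun k => infDist (x + τ k • w) S / τ k) atTop (𝓝 0)}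

/-- The inner tangent cone `T^i_S(x)`. -/
def itcone (S : Set X) (x : X) : Set X :=
  {w | Tendsto (fun τ : ℝ => infDist (x + τ • w) S / τ) (𝓝[>] (0 : ℝ)) (𝓝 0)}

/-- The second-order tangent set `T²_S(x,w)`. -/
def tcone2 (S : Set X) (x w : X) : Set X :=
  {z | ∃ τ : ℕ → ℝ, (∀ k, 0 < τ k) ∧ Tendsto τ atTop (𝓝 0) ∧
    Tendsto (fun k => infDist (x + τ k • w + ((τ k) ^ 2 / 2) • z) S / (τ k) ^ 2) atTop (𝓝 0)}

/-- The inner second-order tangent set `T^{i,2}_S(x,w)`. -/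
def itcone2 (S : Set X) (x w : X) : Set X :=
  {z | Tendsto (fun τ : ℝ => infDist (x + τ • w + (τ ^ 2 / 2) • z) S / τ ^ 2)
    (𝓝[>] (0 : ℝ)) (𝓝 0)}

/-- `S` is parabolically derivable at `x` for `w`. -/
def ParabolicallyDerivable (S : Set X) (x w : X) : Prop :=
  itcone2 S x w = tcone2 S x w ∧ (tcone2 S x w).Nonempty

/-- The subderivative `dh(x)(w)`. -/
def subderiv (h : X → EReal) (x w : X) : EReal :=
  liminf (fun p : ℝ × X => (h (x + p.1 • p.2) - h x) * (((p.1)⁻¹ : ℝ) : EReal))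
    ((𝓝[>] (0 : ℝ)) ×ˢ 𝓝 w)

/-- The second-order difference quotient `Δ²_τ h(x)(w')` (without a vector `v`),
with the convention that it equals `⊤` whenever `h(x+τw')` and `dh(x)(w')` are
simultaneously `+∞` or simultaneously `−∞`. -/
def quot2 (h : X → EReal) (x : X) (τ : ℝ) (w' : X) : EReal :=
  if (h (x + τ • w') = ⊤ ∧ subderiv h x w' = ⊤) ∨ (h (x + τ • w') = ⊥ ∧ subderiv h x w' = ⊥)
  then ⊤
  else (h (x + τ • w') - h x - (τ : EReal) * subderiv h x w') * (((2 / τ ^ 2) : ℝ) : EReal)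

/-- The second subderivative `d²h(x)(w)` (without a vector `v`). -/
def subderiv2 (h : X → EReal) (x w : X) : EReal :=
  liminf (fun p : ℝ × X => quot2 h x p.1 p.2) ((𝓝[>] (0 : ℝ)) ×ˢ 𝓝 w)

/-- The parabolic subderivative `d²h(x)(w|z)`. -/
def psubderiv (h : X → EReal) (x w z : X) : EReal :=
  liminf (fun p : ℝ × X =>
      (h (x + p.1 • w + (p.1 ^ 2 / 2) • p.2) - h x - (p.1 : EReal) * subderiv h x w)
        * (((2 / p.1 ^ 2) : ℝ) : EReal))
    ((𝓝[>] (0 : ℝ)) ×ˢ 𝓝 z)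

/-- `h` is parabolically epi-differentiable at `x` for `w`. -/
def ParaEpiDiffAt (h : X → EReal) (x w : X) : Prop :=
  (∃ z, psubderiv h x w z ≠ ⊤) ∧
  ∀ z : X, ∀ τ : ℕ → ℝ, (∀ k, 0 < τ k) → Tendsto τ atTop (𝓝 (0 : ℝ)) →
    ∃ zs : ℕ → X, Tendsto zs atTop (𝓝 z) ∧
      Tendsto (fun k =>
          (h (x + τ k • w + ((τ k) ^ 2 / 2) • zs k) - h x
              - ((τ k : ℝ) : EReal) * subderiv h x w)
            * (((2 / (τ k) ^ 2) : ℝ) : EReal))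
        atTop (𝓝 (psubderiv h x w z))

/-- A polyhedral (convex) set: a finite intersection of closed half-spaces. -/
def IsPolyhedral (C : Set X) : Prop :=
  ∃ (k : ℕ) (a : Fin k → (X →L[ℝ] ℝ)) (b : Fin k → ℝ), C = {y | ∀ i, a i y ≤ b i}

/-- `g` is (Fréchet) twice differentiable on `U`. -/
def TwiceDiffOn (g : X → Y) (U : Set X) : Prop :=
  (∀ y ∈ U, DifferentiableAt ℝ g y) ∧ ∀ y ∈ U, DifferentiableAt ℝ (fderiv ℝ g) y

/-- `ψ` is piecewise twice differentiable (PWTD) with pieces `Ω i` and twice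
differentiable selections `sel i`. -/
structure IsPWTD (ψ : X → EReal) {s : ℕ} (Ω : Fin s → Set X) (sel : Fin s → X → ℝ) : Prop where
  dom_nonempty : (edom ψ).Nonempty
  dom_eq : edom ψ = ⋃ i, Ω i
  polyhedral : ∀ i, IsPolyhedral (Ω i)
  smooth : ∀ i, ∃ U : Set X, IsOpen U ∧ Ω i ⊆ U ∧ TwiceDiffOn (sel i) U
  agrees : ∀ i, ∀ y ∈ Ω i, ψ y = ((sel i y : ℝ) : EReal)

/-- The active index set `J_y`. -/
def Jset {s : ℕ} (Ω : Fin s → Set X) (y : X) : Set (Fin s) := {i | y ∈ Ω i}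

/-- The active index set `J_{y,w}`. -/
def Jset2 {s : ℕ} (Ω : Fin s → Set X) (y w : X) : Set (Fin s) :=
  {i | y ∈ Ω i ∧ w ∈ tcone (Ω i) y}

/-- `⟨w, ∇²g(y)w⟩`, the Hessian quadratic form of `g` at `y`. -/
def hess (g : X → ℝ) (y w : X) : ℝ := fderiv ℝ (fderiv ℝ g) y w w

/-- `ψ` is locally Lipschitz (strictly continuous) relative to its domain. -/
def LipRelDom (ψ : X → EReal) : Prop :=
  ∀ y ∈ edom ψ, ∃ K ε : ℝ, 0 < ε ∧
    ∀ y₁ ∈ edom ψ ∩ ball y ε, ∀ y₂ ∈ edom ψ ∩ ball y ε,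
      |(ψ y₁).toReal - (ψ y₂).toReal| ≤ K * ‖y₁ - y₂‖

/-- `g` has semiderivative `d` at `x` for `w`. -/
def HasSemideriv (g : X → Y) (x w : X) (d : Y) : Prop :=
  Tendsto (fun p : ℝ × X => (p.1)⁻¹ • (g (x + p.1 • p.2) - g x))
    ((𝓝[>] (0 : ℝ)) ×ˢ 𝓝 w) (𝓝 d)

/-- `g` has parabolic semiderivative `d2` at `x` for `w` (with semiderivative `d`)
with respect to `z`. -/
def HasParaSemideriv (g : X → Y) (x w : X) (d : Y) (z : X) (d2 : Y) : Prop :=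
  Tendsto (fun p : ℝ × X =>
      (2 / p.1 ^ 2) • (g (x + p.1 • w + (p.1 ^ 2 / 2) • p.2) - g x - p.1 • d))
    ((𝓝[>] (0 : ℝ)) ×ˢ 𝓝 z) (𝓝 d2)

/-- `g` is parabolically semidifferentiable at `x`. -/
def ParaSemidiffAt (g : X → Y) (x : X) : Prop :=
  ∀ w, ∃ d, HasSemideriv g x w d ∧ ∀ z, ∃ d2, HasParaSemideriv g x w d z d2

/-- The metric subregularity qualification condition for the system `F(x) ∈ D` at `xb`. -/
def MSQC (F : X → Y) (D : Set Y) (xb : X) : Prop :=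
  ∃ κ : ℝ, 0 < κ ∧ ∃ ε : ℝ, 0 < ε ∧
    ∀ x : X, ‖x - xb‖ ≤ ε → infDist x (F ⁻¹' D) ≤ κ * infDist (F x) D

/-- A piecewise linear function. -/
def IsPWL (g : X → EReal) : Prop :=
  ∃ (l : ℕ) (D : Fin l → Set X), edom g = ⋃ i, D i ∧ (∀ i, IsPolyhedral (D i)) ∧
    ∀ i, ∃ (a : X →L[ℝ] ℝ) (c : ℝ), ∀ y ∈ D i, g y = ((a y + c : ℝ) : EReal)

/-- A piecewise linear-quadratic function. -/
def IsPWLQ (g : X → EReal) : Prop :=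
  ∃ (l : ℕ) (D : Fin l → Set X), edom g = ⋃ i, D i ∧ (∀ i, IsPolyhedral (D i)) ∧
    ∀ i, ∃ (Q : X →L[ℝ] (X →L[ℝ] ℝ)) (a : X →L[ℝ] ℝ) (c : ℝ),
      ∀ y ∈ D i, g y = ((Q y y + a y + c : ℝ) : EReal)

/-- A function which is, piecewise on finitely many polyhedral sets covering its
domain, a positively homogeneous continuous function. -/
def IsPiecewisePosHom (g : X → EReal) : Prop :=
  ∃ (l : ℕ) (D : Fin l → Set X), edom g = ⋃ i, D i ∧ (∀ i, IsPolyhedral (D i)) ∧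
    ∀ i, ∃ hfun : X → ℝ, Continuous hfun ∧
      (∀ t : ℝ, 0 < t → ∀ x, hfun (t • x) = t * hfun x) ∧
      ∀ y ∈ D i, g y = ((hfun y : ℝ) : EReal)

/-- Convexity for extended-real-valued functions. -/
def ERealConvexOn (g : X → EReal) : Prop :=
  ∀ x y : X, ∀ t : ℝ, 0 ≤ t → t ≤ 1 →
    g ((1 - t) • x + t • y) ≤ ((1 - t : ℝ) : EReal) * g x + ((t : ℝ) : EReal) * g y

section InnerSpace

variable {E : Type*} [NormedAddCommGroup E] [InnerProductSpace ℝ E]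

/-- The second-order difference quotient `Δ²_τ h(x|v)(w')`. -/
def quot2v (h : E → EReal) (x v : E) (τ : ℝ) (w' : E) : EReal :=
  (h (x + τ • w') - h x - ((τ * ⟪v, w'⟫ : ℝ) : EReal)) * (((2 / τ ^ 2) : ℝ) : EReal)

/-- The second subderivative `d²h(x|v)(w)`. -/
def subderiv2v (h : E → EReal) (x v w : E) : EReal :=
  liminf (fun p : ℝ × E => quot2v h x v p.1 p.2) ((𝓝[>] (0 : ℝ)) ×ˢ 𝓝 w)

/-- The regular (Fréchet) subdifferential `∂̂h(x)`. -/
def rsubdiff (h : E → EReal) (x : E) : Set E :=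
  {v | (0 : EReal) ≤ liminf (fun x' =>
      (h x' - h x - ((⟪v, x' - x⟫ : ℝ) : EReal)) * ((‖x' - x‖⁻¹ : ℝ) : EReal)) (𝓝[≠] x)}

/-- The limiting (Mordukhovich) subdifferential `∂h(x)`. -/
def lsubdiff (h : E → EReal) (x : E) : Set E :=
  {v | ∃ xs vs : ℕ → E, Tendsto xs atTop (𝓝 x) ∧
    Tendsto (fun k => h (xs k)) atTop (𝓝 (h x)) ∧
    (∀ k, vs k ∈ rsubdiff h (xs k)) ∧ Tendsto vs atTop (𝓝 v)}

/-- The critical cone `C_h(x,v)`. -/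
def ccone (h : E → EReal) (x v : E) : Set E :=
  {w | subderiv h x w = ((⟪v, w⟫ : ℝ) : EReal)}

/-- `h` is twice epi-differentiable at `x` for `v`. -/
def TwiceEpiDiffAt (h : E → EReal) (x v : E) : Prop :=
  ∀ w : E, ∀ τ : ℕ → ℝ, (∀ k, 0 < τ k) → Tendsto τ atTop (𝓝 (0 : ℝ)) →
    ∃ ws : ℕ → E, Tendsto ws atTop (𝓝 w) ∧
      Tendsto (fun k => quot2v h x v (τ k) (ws k)) atTop (𝓝 (subderiv2v h x v w))

/-- `h` is properly twice epi-differentiable at `x` for `v`. -/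
def ProperTwiceEpiDiffAt (h : E → EReal) (x v : E) : Prop :=
  TwiceEpiDiffAt h x v ∧ (∀ w, subderiv2v h x v w ≠ ⊥) ∧ ∃ w, subderiv2v h x v w ≠ ⊤

/-- `h` is parabolically regular at `x` for `v`. -/
def ParaRegularAt (h : E → EReal) (x v : E) : Prop :=
  ∀ w : E, subderiv h x w = ((⟪v, w⟫ : ℝ) : EReal) →
    (⨅ z : E, (psubderiv h x w z - ((⟪v, z⟫ : ℝ) : EReal))) = subderiv2v h x v w

/-- The regular normal cone `N̂_S(u)`. -/
def rncone (S : Set E) (u : E) : Set E :=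
  {v | limsup (fun u' => ((⟪v, u' - u⟫ / ‖u' - u‖ : ℝ) : EReal)) (𝓝[S \ {u}] u) ≤ 0}

/-- The limiting normal cone `N_S(u)`. -/
def lncone (S : Set E) (u : E) : Set E :=
  {v | ∃ us vs : ℕ → E, (∀ k, us k ∈ S) ∧ Tendsto us atTop (𝓝 u) ∧
    (∀ k, vs k ∈ rncone S (us k)) ∧ Tendsto vs atTop (𝓝 v)}

/-- `S` is Clarke regular at `u`. -/
def ClarkeRegularAt (S : Set E) (u : E) : Prop := rncone S u = lncone S u

/-- The epigraph of `h`, as a subset of the `ℓ²`-product `E ×₂ ℝ`. -/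
def epi (h : E → EReal) : Set (WithLp 2 (E × ℝ)) :=
  {p | h (WithLp.equiv 2 (E × ℝ) p).1 ≤ (((WithLp.equiv 2 (E × ℝ) p).2 : ℝ) : EReal)}

/-- `h` is (Clarke) regular at `y`: its epigraph is Clarke regular at `(y, h(y))`. -/
def FunRegularAt (h : E → EReal) (y : E) : Prop :=
  ClarkeRegularAt (epi h) ((WithLp.equiv 2 (E × ℝ)).symm (y, (h y).toReal))

/-- The Fenchel conjugate of an extended-real-valued function. -/
def conj (g : E → EReal) (zs : E) : EReal := ⨆ z : E, (((⟪zs, z⟫ : ℝ) : EReal) - g z)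

/-- The set `A_h(y,w)` of subgradients attaining the subderivative. -/
def Aset (h : E → EReal) (y w : E) : Set E :=
  {ξ | ξ ∈ lsubdiff h y ∧ ((⟪ξ, w⟫ : ℝ) : EReal) = subderiv h y w}

end InnerSpace

end Paper

namespace Paper

section SecondOrderTangent

variable {X : Type*} [NormedAddCommGroup X] [NormedSpace ℝ X]
variable {Y : Type*} [NormedAddCommGroup Y] [NormedSpace ℝ Y]

def paraQuot (x w : X) (τ : ℝ) (y : X) : X := (2 / τ ^ 2) • (y - x - τ • w)

lemma add_add_smul_paraQuot {τ : ℝ} (hτ : τ ≠ 0) (x w y : X) :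
    x + τ • w + (τ ^ 2 / 2) • paraQuot x w τ y = y := by
  have h : τ ^ 2 / 2 * (2 / τ ^ 2) = 1 := by field_simp
  rw [paraQuot, smul_smul, h, one_smul]
  abel

lemma HasParaSemideriv.tendsto_paraQuot {g : X → Y} {x w : X} {d : Y} {z : X} {d2 : Y}
    (h : HasParaSemideriv g x w d z d2) {τ : ℕ → ℝ} (hτpos : ∀ k, 0 < τ k)
    (hτ : Tendsto τ atTop (𝓝 0)) {zs : ℕ → X} (hzs : Tendsto zs atTop (𝓝 z)) :
    Tendsto (fun k => paraQuot (g x) d (τ k) (g (x + τ k • w + (τ k ^ 2 / 2) • zs k)))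
      atTop (𝓝 d2) := by
  have hτ' : Tendsto τ atTop (𝓝[>] 0) := tendsto_nhdsWithin_iff.2 ⟨hτ, .of_forall hτpos⟩
  refine (h.comp (hτ'.prodMk hzs)).congr fun k => ?_
  simp only [Function.comp_apply, paraQuot]

lemma mem_tcone2_of_tendsto {S : Set X} {x w z : X} {τ : ℕ → ℝ} (hτpos : ∀ k, 0 < τ k)
    (hτ : Tendsto τ atTop (𝓝 0)) {zs : ℕ → X} (hzs : Tendsto zs atTop (𝓝 z))
    (hS : ∀ k, x + τ k • w + (τ k ^ 2 / 2) • zs k ∈ S) : z ∈ tcone2 S x w := by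
  have hbound : ∀ k,
      infDist (x + τ k • w + (τ k ^ 2 / 2) • z) S / τ k ^ 2 ≤ dist z (zs k) / 2 := by
    intro k
    have hτk := hτpos k
    rw [div_le_iff₀ (by positivity)]
    calc infDist (x + τ k • w + (τ k ^ 2 / 2) • z) S
        ≤ dist (x + τ k • w + (τ k ^ 2 / 2) • z) (x + τ k • w + (τ k ^ 2 / 2) • zs k) :=
          infDist_le_dist_of_mem (hS k)
      _ = dist z (zs k) / 2 * τ k ^ 2 := by
          rw [dist_add_left, dist_smul₀, Real.norm_of_nonneg (by positivity)]
          ring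
  have hlim : Tendsto (fun k => dist z (zs k) / 2) atTop (𝓝 0) := by
    simpa using ((tendsto_const_nhds (x := z)).dist hzs).div_const 2
  exact ⟨τ, hτpos, hτ,
    squeeze_zero (fun k => div_nonneg infDist_nonneg (pow_pos (hτpos k) 2).le) hbound hlim⟩

lemma exists_add_add_smul_mem_dist_le {S : Set X} (hS : S.Nonempty) (x w z : X) {τ : ℝ}
    (hτ : 0 < τ) : ∃ z', x + τ • w + (τ ^ 2 / 2) • z' ∈ S ∧
      dist z' z ≤ 2 * (infDist (x + τ • w + (τ ^ 2 / 2) • z) S / τ ^ 2) + 2 * τ := by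
  obtain ⟨y, hyS, hy⟩ := (infDist_lt_iff hS).1
    (lt_add_of_pos_right (infDist (x + τ • w + (τ ^ 2 / 2) • z) S) (pow_pos hτ 3))
  refine ⟨paraQuot x w τ y, by rwa [add_add_smul_paraQuot hτ.ne'], ?_⟩
  rw [← add_add_smul_paraQuot hτ.ne' x w y, dist_add_left, dist_smul₀,
    Real.norm_of_nonneg (by positivity), dist_comm] at hy
  rw [show 2 * (infDist (x + τ • w + (τ ^ 2 / 2) • z) S / τ ^ 2) + 2 * τ
      = (infDist (x + τ • w + (τ ^ 2 / 2) • z) S + τ ^ 3) / (τ ^ 2 / 2) by field_simp]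
  exact (le_div_iff₀' (by positivity)).2 hy.le

lemma exists_tendsto_of_mem_tcone2 {S : Set X} (hS : S.Nonempty) {x w z : X}
    (hz : z ∈ tcone2 S x w) :
    ∃ τ : ℕ → ℝ, (∀ k, 0 < τ k) ∧ Tendsto τ atTop (𝓝 0) ∧ ∃ zs : ℕ → X,
      Tendsto zs atTop (𝓝 z) ∧ ∀ k, x + τ k • w + (τ k ^ 2 / 2) • zs k ∈ S := by
  obtain ⟨τ, hτpos, hτ, hdist⟩ := hz
  choose zs hzsS hzs using fun k => exists_add_add_smul_mem_dist_le hS x w z (hτpos k)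
  have hlim : Tendsto (fun k => 2 * (infDist (x + τ k • w + (τ k ^ 2 / 2) • z) S / τ k ^ 2)
      + 2 * τ k) atTop (𝓝 0) := by
    simpa using (hdist.const_mul 2).add (hτ.const_mul 2)
  exact ⟨τ, hτpos, hτ, zs,
    tendsto_iff_dist_tendsto_zero.2 (squeeze_zero (fun _ => dist_nonneg) hzs hlim), hzsS⟩

lemma HasParaSemideriv.mem_tcone2_of_mem_tcone2_preimage {g : X → Y} {D : Set Y}
    (hD : (g ⁻¹' D).Nonempty) {x w : X} {d : Y} {z : X} {d2 : Y}
    (h : HasParaSemideriv g x w d z d2) (hz : z ∈ tcone2 (g ⁻¹' D) x w) :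
    d2 ∈ tcone2 D (g x) d := by
  obtain ⟨τ, hτpos, hτ, zs, hzs, hmem⟩ := exists_tendsto_of_mem_tcone2 hD hz
  exact mem_tcone2_of_tendsto hτpos hτ (h.tendsto_paraQuot hτpos hτ hzs) fun k => by
    rw [add_add_smul_paraQuot (hτpos k).ne']
    exact hmem k

/-- The directions realising the distances to `S` stay bounded, so by compactness of balls a
subsequence converges, and its limit lies in `T²_S(x, w)`. -/
lemma exists_mem_tcone2_dist_le [ProperSpace X] {S : Set X} (hS : S.Nonempty) {x w u : X}
    {τ : ℕ → ℝ} (hτpos : ∀ k, 0 < τ k) (hτ : Tendsto τ atTop (𝓝 0)) {b : ℕ → ℝ} {β : ℝ}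
    (hb : Tendsto b atTop (𝓝 β))
    (hdist : ∀ᶠ k in atTop, infDist (x + τ k • w + (τ k ^ 2 / 2) • u) S ≤ τ k ^ 2 / 2 * b k) :
    ∃ u₀ ∈ tcone2 S x w, dist u u₀ ≤ β := by
  choose us husS hus using fun k => exists_add_add_smul_mem_dist_le hS x w u (hτpos k)
  have hbound : ∀ᶠ k in atTop, dist (us k) u ≤ b k + 2 * τ k := hdist.mono fun k hk => by
    have hτk := hτpos k
    calc dist (us k) u ≤ 2 * (infDist (x + τ k • w + (τ k ^ 2 / 2) • u) S / τ k ^ 2) + 2 * τ k :=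
          hus k
      _ ≤ 2 * (τ k ^ 2 / 2 * b k / τ k ^ 2) + 2 * τ k := by gcongr
      _ = b k + 2 * τ k := by field_simp
  have hlim : Tendsto (fun k => b k + 2 * τ k) atTop (𝓝 β) := by
    simpa using hb.add (hτ.const_mul 2)
  have hfreq : ∃ᶠ k in atTop, us k ∈ closedBall u (β + 1) :=
    ((hbound.and (hlim.eventually (gt_mem_nhds (lt_add_one β)))).mono
      fun k hk => mem_closedBall.2 (hk.1.trans hk.2.le)).frequently
  obtain ⟨u₀, -, ψ, hψ, hψlim⟩ := tendsto_subseq_of_frequently_bounded isBounded_closedBall hfreq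
  refine ⟨u₀, mem_tcone2_of_tendsto (fun j => hτpos (ψ j)) (hτ.comp hψ.tendsto_atTop) hψlim
    fun j => husS (ψ j), ?_⟩
  rw [dist_comm]
  exact le_of_tendsto_of_tendsto (hψlim.dist tendsto_const_nhds) (hlim.comp hψ.tendsto_atTop)
    (hψ.tendsto_atTop.eventually hbound)

end SecondOrderTangent

theorem statement1_general
    {X : Type*} [NormedAddCommGroup X] [InnerProductSpace ℝ X] [FiniteDimensional ℝ X]
    {m : ℕ} (φ : EuclideanSpace ℝ (Fin m) → EReal)
    (g : X → EuclideanSpace ℝ (Fin m)) (xb : X) (hxb : g xb ∈ edom φ)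
    (dg : X → EuclideanSpace ℝ (Fin m)) (gpp : X → X → EuclideanSpace ℝ (Fin m))
    (hgpp : ∀ w z, HasParaSemideriv g xb w (dg w) z (gpp w z))
    (w : X)
    (κ ε : ℝ) (hκ : 0 < κ) (hε : 0 < ε)
    (hsub : ∀ x : X, ‖x - xb‖ ≤ ε → infDist x (g ⁻¹' edom φ) ≤ κ * infDist (g x) (edom φ)) :
    ∀ p : EuclideanSpace ℝ (Fin m),
      {u : X | gpp w u + p ∈ tcone2 (edom φ) (g xb) (dg w)} ⊆
        {u : X | gpp w u ∈ tcone2 (edom φ) (g xb) (dg w)} +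
          (κ * ‖p‖) • closedBall (0 : X) 1 := by
  intro p u hu
  have hD : (g ⁻¹' edom φ).Nonempty := ⟨xb, hxb⟩
  obtain ⟨τ, hτpos, hτ, v, hv, hvD⟩ := exists_tendsto_of_mem_tcone2 ⟨g xb, hxb⟩ hu
  set xs : ℕ → X := fun k => xb + τ k • w + (τ k ^ 2 / 2) • u
  have hxs : Tendsto xs atTop (𝓝 xb) := by
    simpa using (tendsto_const_nhds.add (hτ.smul_const w)).add
      (((hτ.pow 2).div_const 2).smul_const u)
  have hr := (hgpp w u).tendsto_paraQuot hτpos hτ tendsto_const_nhds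
  -- `g (xs k)` is `(τ²/2)`-close to `g xb + τ dg w + (τ²/2) v k ∈ dom φ`
  have hdist : ∀ᶠ k in atTop, infDist (xs k) (g ⁻¹' edom φ)
      ≤ τ k ^ 2 / 2 * (κ * dist (paraQuot (g xb) (dg w) (τ k) (g (xs k))) (v k)) :=
    (hxs.eventually (closedBall_mem_nhds xb hε)).mono fun k hk => by
      refine (hsub _ (by rwa [dist_eq_norm] at hk)).trans ?_
      have hgxs := add_add_smul_paraQuot (hτpos k).ne' (g xb) (dg w) (g (xs k))
      calc κ * infDist (g (xs k)) (edom φ) ≤ κ * dist (g (xs k)) _ :=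
            mul_le_mul_of_nonneg_left (infDist_le_dist_of_mem (hvD k)) hκ.le
        _ = _ := by
          rw [← hgxs, dist_add_left, dist_smul₀, Real.norm_of_nonneg (by positivity), hgxs]
          ring
  obtain ⟨u₀, hu₀, hdu⟩ := exists_mem_tcone2_dist_le hD hτpos hτ ((hr.dist hv).const_mul κ) hdist
  refine mem_add.2 ⟨u₀, (hgpp w u₀).mem_tcone2_of_mem_tcone2_preimage hD hu₀, u - u₀, ?_,
    add_sub_cancel _ _⟩
  rw [smul_unitClosedBall_of_nonneg (by positivity), mem_closedBall_zero_iff, ← dist_eq_norm]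
  simpa using hdu

/-- Lemma 2.2 (uniform outer estimate for the multifunction `S_w`). -/
theorem statement1
    {X : Type*} [NormedAddCommGroup X] [InnerProductSpace ℝ X] [FiniteDimensional ℝ X]
    {m : ℕ} (φ : EuclideanSpace ℝ (Fin m) → EReal)
    (hproper : Proper φ) (hlsc : LowerSemicontinuous φ)
    (g : X → EuclideanSpace ℝ (Fin m)) (xb : X) (hxb : g xb ∈ edom φ)
    (dg : X → EuclideanSpace ℝ (Fin m)) (gpp : X → X → EuclideanSpace ℝ (Fin m))
    (hdg : ∀ w, HasSemideriv g xb w (dg w))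
    (hgpp : ∀ w z, HasParaSemideriv g xb w (dg w) z (gpp w z))
    (w : X) (hw : dg w ∈ tcone (edom φ) (g xb))
    (κ ε : ℝ) (hκ : 0 < κ) (hε : 0 < ε)
    (hsub : ∀ x : X, ‖x - xb‖ ≤ ε → infDist x (g ⁻¹' edom φ) ≤ κ * infDist (g x) (edom φ)) :
    ∀ p : EuclideanSpace ℝ (Fin m),
      {u : X | gpp w u + p ∈ tcone2 (edom φ) (g xb) (dg w)} ⊆
        {u : X | gpp w u ∈ tcone2 (edom φ) (g xb) (dg w)} +
          (κ * ‖p‖) • closedBall (0 : X) 1 :=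
  statement1_general φ g xb hxb dg gpp hgpp w κ ε hκ hε hsub

end Paper
end
end

section
/- Let ψ : ℝ^m → ℝ∪{+∞} be PWTD with pieces Ω_1,…,Ω_s and twice differentiable selections ψ_1,…,ψ_s. Then: (i) dom ψ is closed, ψ is continuous relative to dom ψ, and ψ is lower semicontinuous on ℝ^m; (ii) for each y ∈ dom ψ, dom dψ(y) = T_{dom ψ}(y) = ⋃_{j∈J_y} T_{Ω_j}(y); (iii) for any y ∈ dom ψ and w ∈ ℝ^m, dψ(y)(w) = lim_{τ↓0} [ψ(y+τw) − ψ(y)]/τ, which equals ⟨∇ψ_k(y), w⟩ for any k ∈ J_{y,w} when J_{y,w} ≠ ∅ and equals +∞ when J_{y,w} = ∅; consequently dψ(y) is a proper piecewise linear function. -/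
open Filter Topology Metric Set Pointwise
open scoped RealInnerProductSpace Classical

noncomputable section

/-!
At a point `y` of a polyhedral set, the set coincides near `y` with `y` plus its tangent cone (the
cone cut out by the active constraints): rays in the tangent cone stay in the set for small
`τ > 0`, and all directions near a `w` outside it leave the set at once. Hence, as `τ ↓ 0` and
`w' → w`, the point `y + τ w'` can only lie in pieces `Ω_i` with `i ∈ J_{y,w}`. There the
difference quotient of `ψ` is that of the differentiable `ψ_i`, which tends to `⟨∇ψ_i(y), w⟩`;
if `J_{y,w} = ∅` the quotient is eventually `+∞`. This gives the formula for `dψ(y)`, and with it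
the description of its domain as a union of tangent cones on which it is linear.
-/

namespace Paper

variable {X : Type*} [NormedAddCommGroup X] [NormedSpace ℝ X]

theorem tendsto_add_smul_nhdsGT_prod (y w : X) :
    Tendsto (fun p : ℝ × X => y + p.1 • p.2) (𝓝[>] (0 : ℝ) ×ˢ 𝓝 w) (𝓝 y) := by
  have h : Tendsto (fun p : ℝ × X => y + p.1 • p.2) (𝓝 0 ×ˢ 𝓝 w) (𝓝 (y + (0 : ℝ) • w)) := by
    rw [← nhds_prod_eq]
    exact (continuous_const.add (continuous_fst.smul continuous_snd)).tendsto _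
  rw [zero_smul, add_zero] at h
  exact h.mono_left (prod_mono nhdsWithin_le_nhds le_rfl)

section TangentCone

variable {S : Set X} {y w : X}

theorem mem_tcone_of_eventually (h : ∀ᶠ τ in 𝓝[>] (0 : ℝ), y + τ • w ∈ S) : w ∈ tcone S y := by
  have hτ : Tendsto (fun k : ℕ => 1 / ((k : ℝ) + 1)) atTop (𝓝[>] 0) :=
    tendsto_nhdsWithin_iff.mpr ⟨tendsto_one_div_add_atTop_nhds_zero_nat,
      .of_forall fun _ => mem_Ioi.mpr Nat.one_div_pos_of_nat⟩
  refine ⟨_, fun k => Nat.one_div_pos_of_nat, hτ.mono_right nhdsWithin_le_nhds,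
    tendsto_const_nhds.congr' ?_⟩
  filter_upwards [hτ.eventually h] with k hk
  rw [infDist_zero_of_mem hk, zero_div]

theorem tcone_mono {T : Set X} (hST : S ⊆ T) (hS : S.Nonempty) : tcone S y ⊆ tcone T y := by
  rintro w ⟨τ, hpos, hτ0, hlim⟩
  refine ⟨τ, hpos, hτ0, squeeze_zero (fun k => div_nonneg infDist_nonneg (hpos k).le)
    (fun k => ?_) hlim⟩
  exact div_le_div_of_nonneg_right (infDist_le_infDist_of_subset hST hS) (hpos k).le

theorem frequently_add_smul_mem_of_mem_tcone (hS : S.Nonempty) (hw : w ∈ tcone S y) :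
    ∃ᶠ p in 𝓝[>] (0 : ℝ) ×ˢ 𝓝 w, y + p.1 • p.2 ∈ S := by
  obtain ⟨τ, hpos, hτ0, hlim⟩ := hw
  have hnear : ∀ k, ∃ z ∈ S, dist (y + τ k • w) z < infDist (y + τ k • w) S + τ k ^ 2 :=
    fun k => (infDist_lt_iff hS).mp (lt_add_of_pos_right _ (pow_pos (hpos k) 2))
  choose z hzS hz using hnear
  set w' := fun k => (τ k)⁻¹ • (z k - y)
  have hz_eq : ∀ k, y + τ k • w' k = z k := fun k => by
    simp only [w', smul_inv_smul₀ (hpos k).ne', add_sub_cancel]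
  have hdist : ∀ k, ‖w' k - w‖ ≤ infDist (y + τ k • w) S / τ k + τ k := fun k => by
    have hτ := hpos k
    calc ‖w' k - w‖ = ‖(τ k)⁻¹ • (z k - (y + τ k • w))‖ := by
          simp only [w', smul_sub, smul_add, inv_smul_smul₀ hτ.ne']; abel_nf
      _ = dist (y + τ k • w) (z k) / τ k := by
          rw [norm_smul, norm_inv, Real.norm_of_nonneg hτ.le, dist_comm, dist_eq_norm,
            inv_mul_eq_div]
      _ ≤ (infDist (y + τ k • w) S + τ k ^ 2) / τ k := by gcongr; exact (hz k).le
      _ = infDist (y + τ k • w) S / τ k + τ k := by field_simp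
  have hw' : Tendsto w' atTop (𝓝 w) := tendsto_iff_norm_sub_tendsto_zero.mpr <|
    squeeze_zero (fun _ => norm_nonneg _) hdist (by simpa using hlim.add hτ0)
  have hp : Tendsto (fun k => (τ k, w' k)) atTop (𝓝[>] (0 : ℝ) ×ˢ 𝓝 w) :=
    (tendsto_nhdsWithin_iff.mpr ⟨hτ0, .of_forall hpos⟩).prodMk hw'
  exact hp.frequently (.of_forall fun k => (hz_eq k).symm ▸ hzS k)

end TangentCone

section Polyhedral

variable {k : ℕ} {a : Fin k → X →L[ℝ] ℝ} {b : Fin k → ℝ} {y w : X}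

def activeCone (a : Fin k → X →L[ℝ] ℝ) (b : Fin k → ℝ) (y : X) : Set X :=
  {v | ∀ i, a i y = b i → a i v ≤ 0}

theorem isPolyhedral_activeCone : IsPolyhedral (activeCone a b y) := by
  refine ⟨k, fun i => if a i y = b i then a i else 0, 0, ?_⟩
  ext v
  refine ⟨fun h i => ?_, fun h i hi => by simpa [hi] using h i⟩
  dsimp only
  split_ifs with hi
  exacts [h i hi, le_rfl]

theorem eventually_add_smul_mem_of_mem_activeCone (hy : ∀ i, a i y ≤ b i)
    (hw : w ∈ activeCone a b y) :
    ∀ᶠ τ in 𝓝[>] (0 : ℝ), ∀ i, a i (y + τ • w) ≤ b i := by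
  simp only [map_add, map_smul, smul_eq_mul]
  refine eventually_all.mpr fun i => ?_
  by_cases hact : a i y = b i
  · filter_upwards [self_mem_nhdsWithin] with τ (hτ : 0 < τ)
    nlinarith [hw i hact]
  · have hlim : Tendsto (fun τ : ℝ => a i y + τ * a i w) (𝓝[>] 0) (𝓝 (a i y)) := by
      simpa using ((continuous_const.add (continuous_id.mul continuous_const)).tendsto
        (0 : ℝ) (f := fun τ : ℝ => a i y + τ * a i w)).mono_left nhdsWithin_le_nhds
    exact (hlim.eventually_lt_const (lt_of_le_of_ne (hy i) hact)).mono fun _ => le_of_lt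

theorem eventually_add_smul_not_mem_of_not_mem_activeCone (hw : w ∉ activeCone a b y) :
    ∀ᶠ p in 𝓝[>] (0 : ℝ) ×ˢ 𝓝 w, ¬ ∀ i, a i (y + p.1 • p.2) ≤ b i := by
  obtain ⟨i, hact, hpos⟩ : ∃ i, a i y = b i ∧ 0 < a i w := by
    simpa [activeCone] using hw
  have hτ : ∀ᶠ p : ℝ × X in 𝓝[>] (0 : ℝ) ×ˢ 𝓝 w, 0 < p.1 :=
    tendsto_fst.eventually self_mem_nhdsWithin
  have hw' : ∀ᶠ p : ℝ × X in 𝓝[>] (0 : ℝ) ×ˢ 𝓝 w, 0 < a i p.2 :=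
    tendsto_snd.eventually (((a i).continuous.tendsto w).eventually_const_lt hpos)
  filter_upwards [hτ, hw'] with p hp1 hp2 hmem
  have := hmem i
  rw [map_add, map_smul, smul_eq_mul, hact] at this
  nlinarith

theorem tcone_polyhedron_eq_activeCone (hy : ∀ i, a i y ≤ b i) :
    tcone {x | ∀ i, a i x ≤ b i} y = activeCone a b y := by
  refine Subset.antisymm (fun w hw => ?_) fun w hw =>
    mem_tcone_of_eventually (eventually_add_smul_mem_of_mem_activeCone hy hw)
  by_contra hwK
  exact frequently_add_smul_mem_of_mem_tcone (S := {x | ∀ i, a i x ≤ b i}) ⟨y, hy⟩ hw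
    (eventually_add_smul_not_mem_of_not_mem_activeCone hwK)

end Polyhedral

namespace IsPolyhedral

variable {C : Set X} {y w : X}

theorem isClosed (hC : IsPolyhedral C) : IsClosed C := by
  obtain ⟨k, a, b, rfl⟩ := hC
  simp only [ofPred_forall]
  exact isClosed_iInter fun i => isClosed_le (a i).continuous continuous_const

theorem isPolyhedral_tcone (hC : IsPolyhedral C) (hy : y ∈ C) : IsPolyhedral (tcone C y) := by
  obtain ⟨k, a, b, rfl⟩ := hC
  rw [tcone_polyhedron_eq_activeCone hy]
  exact isPolyhedral_activeCone

theorem eventually_add_smul_mem (hC : IsPolyhedral C) (hy : y ∈ C) (hw : w ∈ tcone C y) :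
    ∀ᶠ τ in 𝓝[>] (0 : ℝ), y + τ • w ∈ C := by
  obtain ⟨k, a, b, rfl⟩ := hC
  rw [tcone_polyhedron_eq_activeCone hy] at hw
  exact eventually_add_smul_mem_of_mem_activeCone hy hw

theorem eventually_add_smul_not_mem (hC : IsPolyhedral C) (hw : ¬(y ∈ C ∧ w ∈ tcone C y)) :
    ∀ᶠ p in 𝓝[>] (0 : ℝ) ×ˢ 𝓝 w, y + p.1 • p.2 ∉ C := by
  by_cases hy : y ∈ C
  · obtain ⟨k, a, b, rfl⟩ := hC
    rw [tcone_polyhedron_eq_activeCone hy] at hw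
    exact eventually_add_smul_not_mem_of_not_mem_activeCone fun h => hw ⟨hy, h⟩
  · exact (tendsto_add_smul_nhdsGT_prod y w).eventually (hC.isClosed.isOpen_compl.mem_nhds hy)

end IsPolyhedral

theorem isPolyhedral_empty : IsPolyhedral (∅ : Set X) :=
  ⟨1, 0, fun _ => -1, by ext; simp⟩

/-- The difference quotient whose `liminf` as `τ ↓ 0`, `w' → w` is `subderiv h x w`. -/
def diffQuot (h : X → EReal) (x : X) (τ : ℝ) (w' : X) : EReal :=
  (h (x + τ • w') - h x) * ((τ⁻¹ : ℝ) : EReal)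

theorem diffQuot_coe (g : X → ℝ) (x : X) (τ : ℝ) (w' : X) :
    diffQuot (fun x => (g x : EReal)) x τ w' = ((τ⁻¹ * (g (x + τ • w') - g x) : ℝ) : EReal) := by
  rw [diffQuot, mul_comm]
  norm_cast

theorem diffQuot_eq_top {h : X → EReal} {x w' : X} {τ : ℝ} (hx : h x ≠ ⊤) (hτ : 0 < τ)
    (hxτ : h (x + τ • w') = ⊤) : diffQuot h x τ w' = ⊤ := by
  rw [diffQuot, hxτ, EReal.top_sub hx, EReal.top_mul_coe_of_pos (inv_pos.mpr hτ)]

theorem tendsto_diffQuot_of_hasFDerivAt {g : X → ℝ} {g' : X →L[ℝ] ℝ} {x : X}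
    (hg : HasFDerivAt g g' x) (w : X) :
    Tendsto (fun p : ℝ × X => diffQuot (fun x => (g x : EReal)) x p.1 p.2)
      (𝓝[>] (0 : ℝ) ×ˢ 𝓝 w) (𝓝 (g' w : EReal)) := by
  have hτ : Tendsto (fun p : ℝ × X => p.1) (𝓝[>] (0 : ℝ) ×ˢ 𝓝 w) (𝓝[>] 0) := tendsto_fst
  have hd : Tendsto (fun p : ℝ × X => p.1 • p.2) (𝓝[>] (0 : ℝ) ×ˢ 𝓝 w) (𝓝 0) := by
    simpa using tendsto_add_smul_nhdsGT_prod (0 : X) w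
  have hcd : Tendsto (fun p : ℝ × X => p.1⁻¹ • p.1 • p.2) (𝓝[>] (0 : ℝ) ×ˢ 𝓝 w) (𝓝 w) :=
    tendsto_snd.congr' <| (hτ.eventually self_mem_nhdsWithin).mono fun p (hp : 0 < p.1) =>
      (inv_smul_smul₀ hp.ne' p.2).symm
  have := hg.hasFDerivWithinAt.lim (s := univ) hd (.of_forall fun _ => mem_univ _) hcd
  exact (EReal.tendsto_coe.mpr this).congr fun p => (diffQuot_coe g x p.1 p.2).symm

theorem subderiv_le_of_tendsto {h : X → EReal} {x w : X} {d : EReal}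
    (hd : Tendsto (fun τ => diffQuot h x τ w) (𝓝[>] 0) (𝓝 d)) : subderiv h x w ≤ d := by
  have hray : Tendsto (fun τ : ℝ => (τ, w)) (𝓝[>] 0) (𝓝[>] (0 : ℝ) ×ˢ 𝓝 w) :=
    tendsto_id.prodMk tendsto_const_nhds
  calc subderiv h x w ≤ liminf (fun p : ℝ × X => diffQuot h x p.1 p.2) (map (·, w) (𝓝[>] 0)) :=
        liminf_le_liminf_of_le hray
    _ = d := (tendsto_map'_iff.mpr hd).liminf_eq

theorem lowerSemicontinuous_of_continuousOn_edom {Z : Type*} [TopologicalSpace Z] {h : Z → EReal}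
    (hcl : IsClosed (edom h))
    (hc : ContinuousOn h (edom h)) : LowerSemicontinuous h := by
  intro x c hcx
  have hoff : ∀ x', x' ∉ edom h → c < h x' := fun x' hx' => by
    rw [show h x' = ⊤ from not_not.mp hx']
    exact hcx.trans_le le_top
  by_cases hx : x ∈ edom h
  · filter_upwards [eventually_nhdsWithin_iff.mp ((hc x hx).eventually_const_lt hcx)]
      with x' hx' using if h' : x' ∈ edom h then hx' h' else hoff x' h'
  · filter_upwards [hcl.isOpen_compl.mem_nhds hx] using hoff

theorem mem_biUnion_tcone_iff {s : ℕ} {Ω : Fin s → Set X} {y w : X} :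
    w ∈ ⋃ j ∈ Jset Ω y, tcone (Ω j) y ↔ (Jset2 Ω y w).Nonempty := by
  simp [Jset, Jset2, Set.Nonempty]

namespace IsPWTD

variable {ψ : X → EReal} {s : ℕ} {Ω : Fin s → Set X} {sel : Fin s → X → ℝ} {y w : X}
  {i j : Fin s}

theorem exists_mem_of_mem_edom (hψ : IsPWTD ψ Ω sel) (hy : y ∈ edom ψ) : ∃ i, y ∈ Ω i :=
  mem_iUnion.mp (hψ.dom_eq ▸ hy)

theorem isClosed_edom (hψ : IsPWTD ψ Ω sel) : IsClosed (edom ψ) :=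
  hψ.dom_eq ▸ isClosed_iUnion_of_finite fun i => (hψ.polyhedral i).isClosed

theorem differentiableAt (hψ : IsPWTD ψ Ω sel) (hy : y ∈ Ω i) : DifferentiableAt ℝ (sel i) y :=
  let ⟨_, _, hΩU, hU⟩ := hψ.smooth i
  hU.1 y (hΩU hy)

theorem continuousOn_edom (hψ : IsPWTD ψ Ω sel) : ContinuousOn ψ (edom ψ) := by
  rw [hψ.dom_eq]
  refine (locallyFinite_of_finite Ω).continuousOn_iUnion (fun i => (hψ.polyhedral i).isClosed)
    fun i => ?_
  refine ContinuousOn.congr (fun y hy => ?_) (hψ.agrees i)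
  exact (continuous_coe_real_ereal.continuousAt.comp
    (hψ.differentiableAt hy).continuousAt).continuousWithinAt

theorem lowerSemicontinuous (hψ : IsPWTD ψ Ω sel) : LowerSemicontinuous ψ :=
  lowerSemicontinuous_of_continuousOn_edom hψ.isClosed_edom hψ.continuousOn_edom

theorem eventually_mem_Jset2 (hψ : IsPWTD ψ Ω sel) (y w : X) :
    ∀ᶠ p in 𝓝[>] (0 : ℝ) ×ˢ 𝓝 w, y + p.1 • p.2 ∈ edom ψ →
      ∃ i ∈ Jset2 Ω y w, y + p.1 • p.2 ∈ Ω i := by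
  have hout : ∀ᶠ p in 𝓝[>] (0 : ℝ) ×ˢ 𝓝 w, ∀ i ∉ Jset2 Ω y w, y + p.1 • p.2 ∉ Ω i :=
    eventually_all.mpr fun i => by
      by_cases hi : i ∈ Jset2 Ω y w
      · exact .of_forall fun _ h => absurd hi h
      · filter_upwards [(hψ.polyhedral i).eventually_add_smul_not_mem hi] with p hp _ using hp
  filter_upwards [hout] with p hp hdom
  obtain ⟨i, hi⟩ := hψ.exists_mem_of_mem_edom hdom
  exact ⟨i, not_not.mp fun h => hp i h hi, hi⟩

theorem diffQuot_eq_diffQuot_sel (hψ : IsPWTD ψ Ω sel) {τ : ℝ} {w' : X} (hy : y ∈ Ω i)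
    (hyτ : y + τ • w' ∈ Ω i) :
    diffQuot ψ y τ w' = diffQuot (fun x => (sel i x : EReal)) y τ w' := by
  rw [diffQuot, diffQuot, hψ.agrees i _ hy, hψ.agrees i _ hyτ]

theorem tendsto_diffQuot_of_mem_Jset2 (hψ : IsPWTD ψ Ω sel) (hi : i ∈ Jset2 Ω y w) :
    Tendsto (fun τ => diffQuot ψ y τ w) (𝓝[>] 0) (𝓝 (fderiv ℝ (sel i) y w : EReal)) := by
  have hray : Tendsto (fun τ : ℝ => (τ, w)) (𝓝[>] 0) (𝓝[>] (0 : ℝ) ×ˢ 𝓝 w) :=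
    tendsto_id.prodMk tendsto_const_nhds
  have hsel := tendsto_diffQuot_of_hasFDerivAt (hψ.differentiableAt hi.1).hasFDerivAt w
  refine (hsel.comp hray).congr' ?_
  filter_upwards [(hψ.polyhedral i).eventually_add_smul_mem hi.1 hi.2] with τ hτ
  exact (hψ.diffQuot_eq_diffQuot_sel hi.1 hτ).symm

theorem fderiv_apply_eq_of_mem_Jset2 (hψ : IsPWTD ψ Ω sel) (hi : i ∈ Jset2 Ω y w)
    (hj : j ∈ Jset2 Ω y w) :
    fderiv ℝ (sel i) y w = fderiv ℝ (sel j) y w :=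
  EReal.coe_injective <| tendsto_nhds_unique (hψ.tendsto_diffQuot_of_mem_Jset2 hi)
    (hψ.tendsto_diffQuot_of_mem_Jset2 hj)

theorem fderiv_le_subderiv (hψ : IsPWTD ψ Ω sel) (hi : i ∈ Jset2 Ω y w) :
    (fderiv ℝ (sel i) y w : EReal) ≤ subderiv ψ y w := by
  change _ ≤ liminf (fun p : ℝ × X => diffQuot ψ y p.1 p.2) (𝓝[>] (0 : ℝ) ×ˢ 𝓝 w)
  refine (le_liminf_iff (by isBoundedDefault) (by isBoundedDefault)).mpr fun b hb => ?_
  have hsel : ∀ᶠ p in 𝓝[>] (0 : ℝ) ×ˢ 𝓝 w,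
      ∀ j ∈ Jset2 Ω y w, b < diffQuot (fun x => (sel j x : EReal)) y p.1 p.2 :=
    eventually_all.mpr fun j => by
      by_cases hj : j ∈ Jset2 Ω y w
      · have hbj : b < (fderiv ℝ (sel j) y w : EReal) := by
          rwa [hψ.fderiv_apply_eq_of_mem_Jset2 hj hi]
        filter_upwards [(tendsto_diffQuot_of_hasFDerivAt (hψ.differentiableAt hj.1).hasFDerivAt
          w).eventually_const_lt hbj] with p hp _ using hp
      · exact .of_forall fun _ h => absurd h hj
  have hτ : ∀ᶠ p : ℝ × X in 𝓝[>] (0 : ℝ) ×ˢ 𝓝 w, 0 < p.1 :=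
    tendsto_fst.eventually self_mem_nhdsWithin
  filter_upwards [hψ.eventually_mem_Jset2 y w, hsel, hτ] with p hpiece hp hτ
  by_cases hdom : y + p.1 • p.2 ∈ edom ψ
  · obtain ⟨j, hj, hjp⟩ := hpiece hdom
    rw [hψ.diffQuot_eq_diffQuot_sel hj.1 hjp]
    exact hp j hj
  · rw [diffQuot_eq_top (hψ.agrees i y hi.1 ▸ EReal.coe_ne_top _) hτ (not_not.mp hdom)]
    exact hb.trans_le le_top

theorem subderiv_eq_fderiv (hψ : IsPWTD ψ Ω sel) (hi : i ∈ Jset2 Ω y w) :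
    subderiv ψ y w = fderiv ℝ (sel i) y w :=
  (subderiv_le_of_tendsto (hψ.tendsto_diffQuot_of_mem_Jset2 hi)).antisymm
    (hψ.fderiv_le_subderiv hi)

theorem eventually_diffQuot_eq_top (hψ : IsPWTD ψ Ω sel) (hy : y ∈ edom ψ)
    (hJ : Jset2 Ω y w = ∅) : ∀ᶠ p in 𝓝[>] (0 : ℝ) ×ˢ 𝓝 w, diffQuot ψ y p.1 p.2 = ⊤ := by
  filter_upwards [hψ.eventually_mem_Jset2 y w, tendsto_fst.eventually self_mem_nhdsWithin]
    with p hpiece (hτ : 0 < p.1)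
  refine diffQuot_eq_top hy hτ (not_not.mp fun hdom => ?_)
  obtain ⟨i, hi, -⟩ := hpiece hdom
  exact (hJ ▸ hi : i ∈ (∅ : Set (Fin s)))

theorem subderiv_eq_top (hψ : IsPWTD ψ Ω sel) (hy : y ∈ edom ψ) (hJ : Jset2 Ω y w = ∅) :
    subderiv ψ y w = ⊤ :=
  (liminf_congr (hψ.eventually_diffQuot_eq_top hy hJ)).trans (liminf_const ⊤)

theorem tendsto_diffQuot_subderiv (hψ : IsPWTD ψ Ω sel) (hy : y ∈ edom ψ) :
    Tendsto (fun τ => diffQuot ψ y τ w) (𝓝[>] 0) (𝓝 (subderiv ψ y w)) := by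
  obtain hJ | ⟨i, hi⟩ := (Jset2 Ω y w).eq_empty_or_nonempty
  · have hray : Tendsto (fun τ : ℝ => (τ, w)) (𝓝[>] 0) (𝓝[>] (0 : ℝ) ×ˢ 𝓝 w) :=
      tendsto_id.prodMk tendsto_const_nhds
    rw [hψ.subderiv_eq_top hy hJ]
    exact tendsto_const_nhds.congr'
      ((hray.eventually (hψ.eventually_diffQuot_eq_top hy hJ)).mono fun _ h => h.symm)
  · rw [hψ.subderiv_eq_fderiv hi]
    exact hψ.tendsto_diffQuot_of_mem_Jset2 hi

theorem mem_edom_subderiv_iff (hψ : IsPWTD ψ Ω sel) (hy : y ∈ edom ψ) :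
    w ∈ edom (subderiv ψ y) ↔ (Jset2 Ω y w).Nonempty := by
  obtain hJ | ⟨i, hi⟩ := (Jset2 Ω y w).eq_empty_or_nonempty
  · simp [edom, hψ.subderiv_eq_top hy hJ, hJ]
  · simpa [edom, hψ.subderiv_eq_fderiv hi] using ⟨i, hi⟩

theorem tcone_edom (hψ : IsPWTD ψ Ω sel) (hy : y ∈ edom ψ) :
    tcone (edom ψ) y = ⋃ j ∈ Jset Ω y, tcone (Ω j) y := by
  refine Subset.antisymm (fun w hw => mem_biUnion_tcone_iff.mpr ?_) <|
    iUnion₂_subset fun j hj => tcone_mono (hψ.dom_eq ▸ subset_iUnion Ω j) ⟨y, hj⟩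
  obtain ⟨p, hp, hpiece⟩ :=
    ((frequently_add_smul_mem_of_mem_tcone ⟨y, hy⟩ hw).and_eventually
      (hψ.eventually_mem_Jset2 y w)).exists
  obtain ⟨i, hi, -⟩ := hpiece hp
  exact ⟨i, hi⟩

theorem edom_subderiv (hψ : IsPWTD ψ Ω sel) (hy : y ∈ edom ψ) :
    edom (subderiv ψ y) = tcone (edom ψ) y := by
  ext w
  rw [hψ.mem_edom_subderiv_iff hy, hψ.tcone_edom hy, mem_biUnion_tcone_iff]

theorem proper_subderiv (hψ : IsPWTD ψ Ω sel) (hy : y ∈ edom ψ) : Proper (subderiv ψ y) := by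
  refine ⟨fun w => ?_, ?_⟩
  · obtain hJ | ⟨i, hi⟩ := (Jset2 Ω y w).eq_empty_or_nonempty
    · simp [hψ.subderiv_eq_top hy hJ]
    · simp [hψ.subderiv_eq_fderiv hi]
  · obtain ⟨i, hi⟩ := hψ.exists_mem_of_mem_edom hy
    have h0 : (0 : X) ∈ tcone (Ω i) y := mem_tcone_of_eventually (by simpa using hi)
    exact ⟨0, (hψ.mem_edom_subderiv_iff hy).mpr ⟨i, hi, h0⟩⟩

theorem isPWL_subderiv (hψ : IsPWTD ψ Ω sel) (hy : y ∈ edom ψ) : IsPWL (subderiv ψ y) := by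
  refine ⟨s, fun j => {w | j ∈ Jset2 Ω y w}, ?_, fun j => ?_, fun j =>
    ⟨fderiv ℝ (sel j) y, 0, fun w hw => by rw [hψ.subderiv_eq_fderiv hw, add_zero]⟩⟩
  · ext w
    simp [hψ.mem_edom_subderiv_iff hy, Set.Nonempty]
  · by_cases hj : y ∈ Ω j
    · simpa [Jset2, hj] using (hψ.polyhedral j).isPolyhedral_tcone hj
    · simpa [Jset2, hj] using isPolyhedral_empty

end IsPWTD

/-- Lemma 3.1 (subderivatives of PWTD functions). -/
theorem statement4
    {m s : ℕ} (ψ : EuclideanSpace ℝ (Fin m) → EReal)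
    (Ω : Fin s → Set (EuclideanSpace ℝ (Fin m)))
    (sel : Fin s → EuclideanSpace ℝ (Fin m) → ℝ)
    (hψ : IsPWTD ψ Ω sel) :
    (IsClosed (edom ψ) ∧ ContinuousOn ψ (edom ψ) ∧ LowerSemicontinuous ψ) ∧
    (∀ y ∈ edom ψ,
      edom (subderiv ψ y) = tcone (edom ψ) y ∧
      tcone (edom ψ) y = ⋃ j ∈ Jset Ω y, tcone (Ω j) y) ∧
    (∀ y ∈ edom ψ, ∀ w : EuclideanSpace ℝ (Fin m),
      Tendsto (fun τ : ℝ => (ψ (y + τ • w) - ψ y) * ((τ⁻¹ : ℝ) : EReal))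
        (𝓝[>] (0 : ℝ)) (𝓝 (subderiv ψ y w)) ∧
      (∀ k ∈ Jset2 Ω y w, subderiv ψ y w = ((fderiv ℝ (sel k) y w : ℝ) : EReal)) ∧
      (Jset2 Ω y w = ∅ → subderiv ψ y w = ⊤)) ∧
    (∀ y ∈ edom ψ, Proper (subderiv ψ y) ∧ IsPWL (subderiv ψ y)) :=
  ⟨⟨hψ.isClosed_edom, hψ.continuousOn_edom, hψ.lowerSemicontinuous⟩,
    fun _ hy => ⟨hψ.edom_subderiv hy, hψ.tcone_edom hy⟩,
    fun _ hy _ => ⟨hψ.tendsto_diffQuot_subderiv hy, fun _ hk => hψ.subderiv_eq_fderiv hk,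
      hψ.subderiv_eq_top hy⟩,
    fun _ hy => ⟨hψ.proper_subderiv hy, hψ.isPWL_subderiv hy⟩⟩

end Paper
end
end
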